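/- (MLMC complexity, β > γ case) Suppose |E[P_ℓ − P]| ≤ c₁ 2^{−αℓ}, Var[P_ℓ − P_{ℓ−1}] ≤ c₂ 2^{−βℓ}, and the cost per sample on level ℓ satisfies C_ℓ ≤ c₃ 2^{γℓ}, with α ≥ min(β,γ)/2 > 0 and β > γ > 0. Then for every ε ∈ (0, e^{−1}) there exist L ∈ ℕ and sample sizes N₁,…,N_L such that the MLMC estimator P̄ satisfies E[(P̄ − E[P])²] ≤ ε² and total cost ∑_{ℓ=1}^L N_ℓ C_ℓ ≤ c₄ ε^{−2} for a constant c₄ independent of ε. -/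

import Mathlib

/-!
Since `2α ≥ γ`, the squared bias at level `L` is at most `c₁² 2^{-γL}`; the smallest `L` making
this at most `ε²/2` satisfies `2^{γL} ≲ ε⁻²`. With `N_ℓ = ⌈M 2^{-(β+γ)ℓ/2}⌉` and `M ≍ ε⁻²`, the
variance term `∑ V_ℓ / N_ℓ` and the main part `M ∑ 2^{-(β+γ)ℓ/2} C_ℓ` of the cost are both
controlled by the convergent series `∑ 2^{-(β-γ)ℓ/2}`, while rounding up adds at most
`∑_{ℓ ≤ L} C_ℓ ≲ 2^{γL} ≲ ε⁻²` to the cost.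
-/

open MeasureTheory ProbabilityTheory Finset

section OrderedField

variable {K : Type*} [Field K] [LinearOrder K] [IsStrictOrderedRing K] {x : K}

lemma sum_Icc_pow_le_of_lt_one (hx₀ : 0 ≤ x) (hx₁ : x < 1) (m n : ℕ) :
    ∑ i ∈ Icc m n, x ^ i ≤ x ^ m / (1 - x) := by
  rw [← Ico_add_one_right_eq_Icc]
  exact geom_sum_Ico_le_of_lt_one hx₀ hx₁

lemma sum_Icc_pow_le_of_one_lt (hx : 1 < x) (m n : ℕ) :
    ∑ i ∈ Icc m n, x ^ i ≤ x ^ (n + 1) / (x - 1) := by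
  have hx₀ : 0 < x := zero_lt_one.trans hx
  calc ∑ i ∈ Icc m n, x ^ i ≤ ∑ i ∈ range (n + 1), x ^ i :=
        sum_le_sum_of_subset_of_nonneg
          (fun i hi => by simp only [mem_Icc, mem_range] at hi ⊢; omega) fun i _ _ => by positivity
    _ = (x ^ (n + 1) - 1) / (x - 1) := geom_sum_eq hx.ne' _
    _ ≤ x ^ (n + 1) / (x - 1) := div_le_div_of_nonneg_right (by linarith) (sub_pos.2 hx).le

lemma exists_pow_gt_and_pow_le_mul [Archimedean K] {y : K} (hx : 1 < x) (hy : 1 ≤ y) :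
    ∃ n : ℕ, y < x ^ n ∧ x ^ n ≤ x * y := by
  obtain ⟨n, hle, hlt⟩ := exists_nat_pow_near hy hx
  exact ⟨n + 1, hlt, by rw [pow_succ']; gcongr⟩

end OrderedField

section SampleAllocation

variable {ι : Type*} (s : Finset ι) {w : ι → ℝ} {M : ℝ}

lemma sum_div_natCeil_mul_le {V : ι → ℝ} (hM : 0 < M) (hw : ∀ i ∈ s, 0 < w i)
    (hV : ∀ i ∈ s, 0 ≤ V i) :
    ∑ i ∈ s, V i / ⌈M * w i⌉₊ ≤ M⁻¹ * ∑ i ∈ s, V i / w i := by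
  rw [mul_sum]
  refine sum_le_sum fun i hi => ?_
  have hwi := hw i hi
  calc V i / ⌈M * w i⌉₊ ≤ V i / (M * w i) :=
        div_le_div_of_nonneg_left (hV i hi) (by positivity) (Nat.le_ceil _)
    _ = M⁻¹ * (V i / w i) := by field_simp

lemma sum_natCeil_mul_mul_le {C : ι → ℝ} (hM : 0 ≤ M) (hw : ∀ i ∈ s, 0 ≤ w i)
    (hC : ∀ i ∈ s, 0 ≤ C i) :
    ∑ i ∈ s, (⌈M * w i⌉₊ : ℝ) * C i ≤ M * ∑ i ∈ s, w i * C i + ∑ i ∈ s, C i := by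
  rw [mul_sum, ← sum_add_distrib]
  refine sum_le_sum fun i hi => ?_
  have hwi := hw i hi
  calc (⌈M * w i⌉₊ : ℝ) * C i ≤ (M * w i + 1) * C i :=
        mul_le_mul_of_nonneg_right (Nat.ceil_lt_add_one (by positivity)).le (hC i hi)
    _ = M * (w i * C i) + C i := by ring

end SampleAllocation

section GeometricAllocation

variable {r s M : ℝ}

lemma sum_div_natCeil_mul_geometric_le {V : ℕ → ℝ} {c₂ : ℝ} (hr₀ : 0 < r) (hr₁ : r < 1)
    (hc₂ : 0 ≤ c₂) (hs : 0 < s) (hM : 0 < M)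
    (hV₀ : ∀ ℓ, 0 ≤ V ℓ) (hV : ∀ ℓ, 1 ≤ ℓ → V ℓ ≤ c₂ * (r ^ 2 / s) ^ ℓ) (L : ℕ) :
    ∑ ℓ ∈ Icc 1 L, V ℓ / ⌈M * (r / s) ^ ℓ⌉₊ ≤ M⁻¹ * (c₂ * (r / (1 - r))) :=
  calc ∑ ℓ ∈ Icc 1 L, V ℓ / ⌈M * (r / s) ^ ℓ⌉₊
      ≤ M⁻¹ * ∑ ℓ ∈ Icc 1 L, V ℓ / (r / s) ^ ℓ :=
        sum_div_natCeil_mul_le _ hM (fun ℓ _ => by positivity) (fun ℓ _ => hV₀ ℓ)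
    _ ≤ M⁻¹ * ∑ ℓ ∈ Icc 1 L, c₂ * r ^ ℓ := by
        gcongr with ℓ hℓ
        rw [div_le_iff₀ (by positivity)]
        calc V ℓ ≤ c₂ * (r ^ 2 / s) ^ ℓ := hV ℓ (mem_Icc.1 hℓ).1
          _ = c₂ * r ^ ℓ * (r / s) ^ ℓ := by field_simp; ring
    _ ≤ M⁻¹ * (c₂ * (r / (1 - r))) := by
        rw [← mul_sum]
        gcongr
        simpa using sum_Icc_pow_le_of_lt_one hr₀.le hr₁ 1 L

lemma sum_natCeil_mul_geometric_mul_le {C : ℕ → ℝ} {c₃ : ℝ} (hr₀ : 0 < r) (hr₁ : r < 1)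
    (hc₃ : 0 ≤ c₃) (hs : 1 < s) (hM : 0 ≤ M) (hC₀ : ∀ ℓ, 0 ≤ C ℓ)
    (hC : ∀ ℓ, C ℓ ≤ c₃ * s ^ ℓ) (L : ℕ) :
    ∑ ℓ ∈ Icc 1 L, (⌈M * (r / s) ^ ℓ⌉₊ : ℝ) * C ℓ
      ≤ M * (c₃ * (r / (1 - r))) + c₃ * (s ^ (L + 1) / (s - 1)) := by
  have hs₀ : 0 < s := zero_lt_one.trans hs
  calc ∑ ℓ ∈ Icc 1 L, (⌈M * (r / s) ^ ℓ⌉₊ : ℝ) * C ℓ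
      ≤ M * ∑ ℓ ∈ Icc 1 L, (r / s) ^ ℓ * C ℓ + ∑ ℓ ∈ Icc 1 L, C ℓ :=
        sum_natCeil_mul_mul_le _ hM (fun ℓ _ => by positivity) (fun ℓ _ => hC₀ ℓ)
    _ ≤ M * ∑ ℓ ∈ Icc 1 L, c₃ * r ^ ℓ + ∑ ℓ ∈ Icc 1 L, c₃ * s ^ ℓ := by
        refine add_le_add (mul_le_mul_of_nonneg_left (sum_le_sum fun ℓ _ => ?_) hM)
          (sum_le_sum fun ℓ _ => hC ℓ)
        calc (r / s) ^ ℓ * C ℓ ≤ (r / s) ^ ℓ * (c₃ * s ^ ℓ) := by gcongr; exact hC ℓ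
          _ = c₃ * r ^ ℓ := by rw [div_pow]; field_simp
    _ ≤ M * (c₃ * (r / (1 - r))) + c₃ * (s ^ (L + 1) / (s - 1)) := by
        rw [← mul_sum, ← mul_sum]
        gcongr
        · simpa using sum_Icc_pow_le_of_lt_one hr₀.le hr₁ 1 L
        · exact sum_Icc_pow_le_of_one_lt hs 1 L

end GeometricAllocation

/- In the application `x = 2^{γ/2}` and `r = 2^{-(β-γ)/2}`, so that `x⁻¹ ≥ 2^{-α}`,
`r² / x² = 2^{-β}` and `x² = 2^γ`; the sample sizes are `N_ℓ = ⌈M (r / x²)^ℓ⌉`. -/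
theorem exists_levels_samples_of_geometric {b V C : ℕ → ℝ} {c₁ c₂ c₃ x r : ℝ}
    (hc₂ : 0 ≤ c₂) (hc₃ : 0 ≤ c₃) (hx : 1 < x) (hr₀ : 0 < r) (hr₁ : r < 1)
    (hb : ∀ ℓ, |b ℓ| ≤ c₁ * x⁻¹ ^ ℓ)
    (hV₀ : ∀ ℓ, 0 ≤ V ℓ) (hV : ∀ ℓ, 1 ≤ ℓ → V ℓ ≤ c₂ * (r ^ 2 / x ^ 2) ^ ℓ)
    (hC₀ : ∀ ℓ, 0 ≤ C ℓ) (hC : ∀ ℓ, C ℓ ≤ c₃ * (x ^ 2) ^ ℓ) :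
    ∃ c₄ : ℝ, ∀ ε : ℝ, 0 < ε → ε < 1 →
      ∃ (L : ℕ) (N : ℕ → ℕ), (∀ ℓ, 1 ≤ ℓ → ℓ ≤ L → 1 ≤ N ℓ) ∧
        b L ^ 2 + ∑ ℓ ∈ Icc 1 L, V ℓ / N ℓ ≤ ε ^ 2 ∧
        ∑ ℓ ∈ Icc 1 L, (N ℓ : ℝ) * C ℓ ≤ c₄ * ε⁻¹ ^ 2 := by
  set s := x ^ 2
  have hs : 1 < s := one_lt_pow₀ hx two_ne_zero
  set S := r / (1 - r)
  have hS : 0 < S := div_pos hr₀ (sub_pos.2 hr₁)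
  refine ⟨c₃ * (2 * (c₂ + 1) * S ^ 2 + s ^ 2 / (s - 1) * (2 * c₁ ^ 2 + 1)), fun ε hε hε₁ => ?_⟩
  obtain ⟨L, hL_bias, hL_cost⟩ :=
    exists_pow_gt_and_pow_le_mul (y := (2 * c₁ ^ 2 + 1) / ε ^ 2) hs
      ((one_le_div (by positivity)).2 (by nlinarith))
  set M := 2 * (c₂ + 1) * S * ε⁻¹ ^ 2 with hM_def
  have hM : 0 < M := by positivity
  refine ⟨L, fun ℓ => ⌈M * (r / s) ^ ℓ⌉₊, fun ℓ _ _ => Nat.one_le_ceil_iff.2 (by positivity),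
    ?_, ?_⟩
  · have hbias : b L ^ 2 ≤ ε ^ 2 / 2 :=
      calc b L ^ 2 ≤ (c₁ * x⁻¹ ^ L) ^ 2 := sq_le_sq' (abs_le.1 (hb L)).1 (abs_le.1 (hb L)).2
        _ = c₁ ^ 2 / s ^ L := by
          simp only [s, mul_pow, inv_pow, ← pow_mul, div_eq_mul_inv]; ring
        _ ≤ c₁ ^ 2 / ((2 * c₁ ^ 2 + 1) / ε ^ 2) :=
          div_le_div_of_nonneg_left (sq_nonneg _) (by positivity) hL_bias.le
        _ ≤ ε ^ 2 / 2 := by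
          rw [div_div_eq_mul_div, div_le_div_iff₀ (by positivity) two_pos]
          nlinarith [sq_nonneg ε]
    have hvar : M⁻¹ * (c₂ * S) ≤ ε ^ 2 / 2 := by
      rw [hM_def]
      field_simp
      nlinarith [sq_nonneg ε]
    linarith [sum_div_natCeil_mul_geometric_le hr₀ hr₁ hc₂ (zero_lt_one.trans hs) hM hV₀ hV L]
  · have hsL : s ^ (L + 1) ≤ s ^ 2 * (2 * c₁ ^ 2 + 1) * ε⁻¹ ^ 2 := by
      rw [pow_succ']
      calc s * s ^ L ≤ s * (s * ((2 * c₁ ^ 2 + 1) / ε ^ 2)) :=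
            mul_le_mul_of_nonneg_left hL_cost (by positivity)
        _ = s ^ 2 * (2 * c₁ ^ 2 + 1) * ε⁻¹ ^ 2 := by field_simp
    calc ∑ ℓ ∈ Icc 1 L, (⌈M * (r / s) ^ ℓ⌉₊ : ℝ) * C ℓ
        ≤ M * (c₃ * S) + c₃ * (s ^ (L + 1) / (s - 1)) :=
          sum_natCeil_mul_geometric_mul_le hr₀ hr₁ hc₃ hs hM.le hC₀ hC L
      _ ≤ M * (c₃ * S) + c₃ * (s ^ 2 * (2 * c₁ ^ 2 + 1) * ε⁻¹ ^ 2 / (s - 1)) := by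
          gcongr
      _ = c₃ * (2 * (c₂ + 1) * S ^ 2 + s ^ 2 / (s - 1) * (2 * c₁ ^ 2 + 1)) * ε⁻¹ ^ 2 := by
          rw [hM_def]
          ring

lemma two_rpow_half_sq (t : ℝ) : ((2 : ℝ) ^ (t / 2)) ^ 2 = 2 ^ t := by
  rw [← Real.rpow_mul_natCast zero_le_two]
  norm_num

theorem stmt_15_general {Ω : Type*} [MeasureSpace Ω]
    (P : Ω → ℝ) (Pl : ℕ → Ω → ℝ)
    (c₁ c₂ c₃ : ℝ) (hc₁ : 0 ≤ c₁) (hc₂ : 0 ≤ c₂) (hc₃ : 0 ≤ c₃)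
    (α β γ : ℝ) (hαβγ : α ≥ min β γ / 2) (hβγ : β > γ) (hγ : γ > 0)
    (Cl : ℕ → ℝ) (hClnonneg : ∀ ℓ, 0 ≤ Cl ℓ)
    (hbias : ∀ ℓ : ℕ, |∫ ω, (Pl ℓ ω - P ω)| ≤ c₁ * 2 ^ (-α * ℓ))
    (hvar : ∀ ℓ : ℕ, 1 ≤ ℓ →
      variance (fun ω => Pl ℓ ω - Pl (ℓ - 1) ω) (ℙ : Measure Ω) ≤ c₂ * 2 ^ (-β * ℓ))
    (hcost : ∀ ℓ : ℕ, Cl ℓ ≤ c₃ * 2 ^ (γ * ℓ)) :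
    ∃ c₄ : ℝ, ∀ ε : ℝ, 0 < ε → ε < Real.exp (-1) →
      ∃ (L : ℕ) (N : ℕ → ℕ), (∀ ℓ, 1 ≤ ℓ → ℓ ≤ L → 1 ≤ N ℓ) ∧
        (∫ ω, (Pl L ω - P ω)) ^ 2
            + ∑ ℓ ∈ Finset.Icc 1 L,
                variance (fun ω => Pl ℓ ω - Pl (ℓ - 1) ω) (ℙ : Measure Ω) / (N ℓ : ℝ)
          ≤ ε ^ 2 ∧
        ∑ ℓ ∈ Finset.Icc 1 L, (N ℓ : ℝ) * Cl ℓ ≤ c₄ * ε⁻¹ ^ 2 := by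
  rw [min_eq_right hβγ.le] at hαβγ
  have hx : (1 : ℝ) < 2 ^ (γ / 2) := Real.one_lt_rpow one_lt_two (by positivity)
  have hr : (2 : ℝ) ^ ((γ - β) / 2) < 1 :=
    Real.rpow_lt_one_of_one_lt_of_neg one_lt_two (by linarith)
  have hratio : ((2 : ℝ) ^ ((γ - β) / 2)) ^ 2 / ((2 : ℝ) ^ (γ / 2)) ^ 2 = 2 ^ (-β) := by
    rw [two_rpow_half_sq, two_rpow_half_sq, ← Real.rpow_sub two_pos]
    ring_nf
  have hbias' (ℓ : ℕ) : |∫ ω, (Pl ℓ ω - P ω)| ≤ c₁ * ((2 : ℝ) ^ (γ / 2))⁻¹ ^ ℓ := by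
    refine (hbias ℓ).trans (mul_le_mul_of_nonneg_left ?_ hc₁)
    rw [← Real.rpow_neg_one, ← Real.rpow_mul zero_le_two, ← Real.rpow_mul_natCast zero_le_two]
    gcongr
    · exact one_le_two
    · nlinarith
  obtain ⟨c₄, hc₄⟩ := exists_levels_samples_of_geometric (b := fun ℓ => ∫ ω, (Pl ℓ ω - P ω))
    (V := fun ℓ => variance (fun ω => Pl ℓ ω - Pl (ℓ - 1) ω) ℙ) hc₂ hc₃ hx (by positivity) hr
    hbias' (fun ℓ => variance_nonneg _ _)
    (fun ℓ hℓ => by rw [hratio, ← Real.rpow_mul_natCast zero_le_two]; exact hvar ℓ hℓ)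
    hClnonneg
    (fun ℓ => by rw [two_rpow_half_sq, ← Real.rpow_mul_natCast zero_le_two]; exact hcost ℓ)
  exact ⟨c₄, fun ε hε hεe => hc₄ ε hε (hεe.trans (Real.exp_lt_one_iff.2 neg_one_lt_zero))⟩

/-- MLMC complexity theorem, case `β > γ`: under the bias bound
`|E[P_ℓ - P]| ≤ c₁ 2^{-αℓ}`, the variance bound `Var[P_ℓ - P_{ℓ-1}] ≤ c₂ 2^{-βℓ}` and
the cost bound `C_ℓ ≤ c₃ 2^{γℓ}`, with `α ≥ min(β,γ)/2 > 0` and `β > γ > 0`, there is a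
constant `c₄` such that for every `ε ∈ (0, e⁻¹)` one can choose a number of levels `L`
and sample sizes `N_ℓ ≥ 1` so that the mean-squared error of the MLMC estimator,
decomposed as squared bias plus `∑_ℓ Var[Y_ℓ]/N_ℓ`, is at most `ε²` while the total
cost `∑_ℓ N_ℓ C_ℓ` is at most `c₄ ε⁻²`. -/
theorem stmt_15 {Ω : Type*} [MeasureSpace Ω] [IsProbabilityMeasure (ℙ : Measure Ω)]
    (P : Ω → ℝ) (Pl : ℕ → Ω → ℝ) (hPl0 : Pl 0 = 0)
    (hP : MemLp P 2 (ℙ : Measure Ω)) (hPlp : ∀ ℓ, MemLp (Pl ℓ) 2 (ℙ : Measure Ω))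
    (c₁ c₂ c₃ : ℝ) (hc₁ : 0 ≤ c₁) (hc₂ : 0 ≤ c₂) (hc₃ : 0 ≤ c₃)
    (α β γ : ℝ) (hαβγ : α ≥ min β γ / 2) (hβγ : β > γ) (hγ : γ > 0)
    (Cl : ℕ → ℝ) (hClnonneg : ∀ ℓ, 0 ≤ Cl ℓ)
    (hbias : ∀ ℓ : ℕ, |∫ ω, (Pl ℓ ω - P ω)| ≤ c₁ * 2 ^ (-α * ℓ))
    (hvar : ∀ ℓ : ℕ, 1 ≤ ℓ →
      variance (fun ω => Pl ℓ ω - Pl (ℓ - 1) ω) (ℙ : Measure Ω) ≤ c₂ * 2 ^ (-β * ℓ))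
    (hcost : ∀ ℓ : ℕ, Cl ℓ ≤ c₃ * 2 ^ (γ * ℓ)) :
    ∃ c₄ : ℝ, ∀ ε : ℝ, 0 < ε → ε < Real.exp (-1) →
      ∃ (L : ℕ) (N : ℕ → ℕ), (∀ ℓ, 1 ≤ ℓ → ℓ ≤ L → 1 ≤ N ℓ) ∧
        (∫ ω, (Pl L ω - P ω)) ^ 2
            + ∑ ℓ ∈ Finset.Icc 1 L,
                variance (fun ω => Pl ℓ ω - Pl (ℓ - 1) ω) (ℙ : Measure Ω) / (N ℓ : ℝ)
          ≤ ε ^ 2 ∧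
        ∑ ℓ ∈ Finset.Icc 1 L, (N ℓ : ℝ) * Cl ℓ ≤ c₄ * ε⁻¹ ^ 2 :=
  stmt_15_general P Pl c₁ c₂ c₃ hc₁ hc₂ hc₃ α β γ hαβγ hβγ hγ Cl hClnonneg hbias hvar hcost
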